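/- For σ ∈ S_n with k cycles (counting fixed points), the lattice point enumerator of the fixed polytope P_{n-1}^σ satisfies L_{P_{n-1}^σ}(t) = (t+1)^k - t^k for all nonnegative integers t. -/
import Mathlib


open Pointwise

/-- The generators `u₁, …, u_n` of `P_{n-1} ⊂ ℝ^(n-1)`: `u_j = e_j` for `j < n` and
`u_n = -𝟙`, with `n = m+1`. -/
noncomputable def uVec (m : ℕ) (j : Fin (m + 1)) : Fin m → ℝ :=
  if h : (j : ℕ) < m then Pi.single ⟨j, h⟩ 1 else fun _ => -1

/-- The zonotope `P_{n-1} = Z(u₁, …, u_n)`. -/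
noncomputable def Pzono (m : ℕ) : Set (Fin m → ℝ) :=
  ∑ j : Fin (m + 1), segment ℝ 0 (uVec m j)

/-- The matrix `M_σ` of the `S_n`-action on `ℝ^(n-1)`, with `n = m+1`. -/
noncomputable def Msigma (m : ℕ) (σ : Equiv.Perm (Fin (m + 1))) : Matrix (Fin m) (Fin m) ℝ :=
  Matrix.of fun i j =>
    if σ j.castSucc = i.castSucc then 1
    else if σ j.castSucc = Fin.last m then -1 else 0

/-- The cycle supports of `σ` (including fixed points as 1-cycles). -/
noncomputable def cycleSupports (m : ℕ) (σ : Equiv.Perm (Fin (m + 1))) :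
    Finset (Finset (Fin (m + 1))) :=
  Finset.univ.image fun x => Finset.univ.filter fun y => σ.SameCycle x y

-- auxiliary sum evaluation
lemma sum_eval (m : ℕ) (σ : Equiv.Perm (Fin (m + 1))) (p : Fin m → ℝ) (c : Fin (m + 1)) :
    (∑ j : Fin m, if σ j.castSucc = c then p j else 0)
      = (Fin.snoc p 0 : Fin (m+1) → ℝ) (σ.symm c) := by
  rcases Fin.eq_castSucc_or_eq_last (σ.symm c) with ⟨i, hi⟩ | hlast
  · rw [hi, Fin.snoc_castSucc]
    have hiff : ∀ j : Fin m, σ j.castSucc = c ↔ j = i := by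
      intro j
      constructor
      · intro h
        have : j.castSucc = σ.symm c := by rw [← h, Equiv.symm_apply_apply]
        rw [hi] at this
        exact Fin.castSucc_injective m this
      · rintro rfl
        have : σ.symm c = j.castSucc := hi
        rw [Equiv.symm_apply_eq] at this
        exact this.symm
    rw [Finset.sum_congr rfl (fun j _ => if_congr (hiff j) rfl rfl)]
    simp
  · rw [hlast, Fin.snoc_last]
    refine Finset.sum_eq_zero fun j _ => ?_
    rw [if_neg]
    intro h
    have : j.castSucc = σ.symm c := by rw [← h, Equiv.symm_apply_apply]
    rw [hlast] at this
    exact Fin.ne_last_of_lt (Fin.castSucc_lt_last j) this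

lemma fix_char (m : ℕ) (σ : Equiv.Perm (Fin (m + 1))) (p : Fin m → ℝ) :
    (Msigma m σ).mulVec p = p ↔
      (Fin.snoc p 0 : Fin (m+1) → ℝ) ∘ σ = Fin.snoc p 0 := by
  set q : Fin (m+1) → ℝ := Fin.snoc p 0 with hq
  have hmv : ∀ i : Fin m, (Msigma m σ).mulVec p i
      = q (σ.symm i.castSucc) - q (σ.symm (Fin.last m)) := by
    intro i
    have : (Msigma m σ).mulVec p i
        = ∑ j : Fin m, ((if σ j.castSucc = i.castSucc then p j else 0)
            - (if σ j.castSucc = Fin.last m then p j else 0)) := by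
      rw [Matrix.mulVec, dotProduct]
      refine Finset.sum_congr rfl fun j _ => ?_
      simp only [Msigma, Matrix.of_apply]
      have h3 : i.castSucc ≠ Fin.last m := Fin.ne_last_of_lt (Fin.castSucc_lt_last i)
      by_cases h1 : σ j.castSucc = i.castSucc
      · have h2 : ¬ (σ j.castSucc = Fin.last m) := by
          rw [h1]; exact h3
        simp [h1, h2, h3, h3.symm]
      · by_cases h2 : σ j.castSucc = Fin.last m <;> simp [h1, h2, h3, h3.symm]
    rw [this, Finset.sum_sub_distrib, sum_eval, sum_eval]
  constructor
  · intro h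
    -- get the shifted equations
    have hqlast : q (Fin.last m) = 0 := by rw [hq, Fin.snoc_last]
    set c : ℝ := q (σ.symm (Fin.last m)) with hc
    have hall : ∀ a : Fin (m+1), q (σ.symm a) = q a + c := by
      intro a
      rcases Fin.eq_castSucc_or_eq_last a with ⟨i, hi⟩ | hlast
      · have := congrFun h i
        rw [hmv i] at this
        have hqi : q i.castSucc = p i := by rw [hq, Fin.snoc_castSucc]
        rw [hi]
        linarith
      · rw [hlast, hqlast, zero_add, hc]
    have hc0 : c = 0 := by
      have hsum : ∑ a : Fin (m+1), q (σ.symm a) = ∑ a : Fin (m+1), q a :=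
        Equiv.sum_comp σ.symm q
      rw [Finset.sum_congr rfl (fun a _ => hall a), Finset.sum_add_distrib,
        Finset.sum_const, Finset.card_univ, Fintype.card_fin] at hsum
      have hmne : (0:ℝ) < (m+1 : ℕ) := by positivity
      have : ((m+1 : ℕ) : ℝ) * c = 0 := by
        rw [nsmul_eq_mul] at hsum; linarith
      rcases mul_eq_zero.1 this with h' | h'
      · exact absurd h' (ne_of_gt hmne)
      · exact h'
    funext a
    have := hall (σ a)
    rw [Equiv.symm_apply_apply, hc0, add_zero] at this
    exact this.symm
  · intro h
    have hinv : ∀ a, q (σ.symm a) = q a := by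
      intro a
      have := congrFun h (σ.symm a)
      simp only [Function.comp_apply, Equiv.apply_symm_apply] at this
      exact this.symm
    funext i
    rw [hmv i, hinv, hinv, hq, Fin.snoc_last, sub_zero, Fin.snoc_castSucc]

lemma uVec_castSucc (m : ℕ) (i : Fin m) : uVec m i.castSucc = Pi.single i 1 := by
  rw [uVec, dif_pos (by simpa using i.isLt)]
  congr 1

lemma uVec_last (m : ℕ) : uVec m (Fin.last m) = fun _ => -1 := by
  rw [uVec, dif_neg (by simp)]

lemma mem_segment_zero {n : ℕ} {v x : Fin n → ℝ} :
    x ∈ segment ℝ (0 : Fin n → ℝ) v ↔ ∃ θ : ℝ, 0 ≤ θ ∧ θ ≤ 1 ∧ θ • v = x := by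
  rw [segment_eq_image]
  constructor
  · rintro ⟨θ, hθ, h⟩
    rw [Set.mem_Icc] at hθ
    refine ⟨θ, hθ.1, hθ.2, ?_⟩
    rw [← h]; simp
  · rintro ⟨θ, h0, h1, h⟩
    exact ⟨θ, Set.mem_Icc.2 ⟨h0, h1⟩, by simpa using h⟩

lemma sum_smul_uVec (m : ℕ) (θ : Fin (m+1) → ℝ) (i : Fin m) :
    (∑ j : Fin (m+1), θ j • uVec m j) i = θ i.castSucc - θ (Fin.last m) := by
  rw [Finset.sum_apply]
  rw [Fin.sum_univ_castSucc]
  simp only [uVec_castSucc, uVec_last, Pi.smul_apply, smul_eq_mul]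
  rw [Finset.sum_congr rfl (fun j _ => by rw [Pi.single_apply])]
  simp only [mul_ite, mul_one, mul_zero]
  rw [Finset.sum_ite_eq Finset.univ i (fun j => θ (Fin.castSucc j))]
  simp only [Finset.mem_univ, if_true]
  ring

lemma pzono_char (m : ℕ) (p : Fin m → ℝ) :
    p ∈ Pzono m ↔ ∀ i j : Fin (m+1),
      (Fin.snoc p 0 : Fin (m+1) → ℝ) i - (Fin.snoc p 0 : Fin (m+1) → ℝ) j ≤ 1 := by
  set q : Fin (m+1) → ℝ := Fin.snoc p 0 with hq
  have hqlast : q (Fin.last m) = 0 := by rw [hq, Fin.snoc_last]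
  rw [Pzono, Set.mem_fintype_sum]
  constructor
  · rintro ⟨g, hg, hsum⟩
    choose θ h0 h1 hv using fun j => (mem_segment_zero.1 (hg j))
    have hcoord : ∀ i : Fin m, p i = θ i.castSucc - θ (Fin.last m) := by
      intro i
      rw [← hsum]
      rw [show (∑ i, g i) = ∑ j, θ j • uVec m j from
        Finset.sum_congr rfl (fun j _ => (hv j).symm)]
      exact sum_smul_uVec m θ i
    have hqθ : ∀ a : Fin (m+1), q a = θ a - θ (Fin.last m) := by
      intro a
      rcases Fin.eq_castSucc_or_eq_last a with ⟨i, hi⟩ | hlast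
      · rw [hi, hq, Fin.snoc_castSucc, hcoord i]
      · rw [hlast, hqlast]; ring
    intro i j
    rw [hqθ i, hqθ j]
    have := h0 j
    have := h1 i
    linarith [h0 j, h1 i]
  · intro h
    have hne : (Finset.univ.image q).Nonempty :=
      ⟨q (Fin.last m), Finset.mem_image.2 ⟨Fin.last m, Finset.mem_univ _, rfl⟩⟩
    set mn := (Finset.univ.image q).min' hne with hmn
    obtain ⟨b0, -, hb0⟩ := Finset.mem_image.1 ((Finset.univ.image q).min'_mem hne)
    have hmnle : ∀ a, mn ≤ q a := fun a =>
      Finset.min'_le _ _ (Finset.mem_image.2 ⟨a, Finset.mem_univ _, rfl⟩)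
    refine ⟨fun j => (q j - mn) • uVec m j, fun j => mem_segment_zero.2
      ⟨q j - mn, by linarith [hmnle j], by rw [hmn, ← hb0]; linarith [h j b0], rfl⟩, ?_⟩
    funext i
    rw [sum_smul_uVec m (fun a => q a - mn) i]
    show (q i.castSucc - mn) - (q (Fin.last m) - mn) = p i
    have h1 : q i.castSucc = p i := by rw [hq, Fin.snoc_castSucc]
    rw [hqlast, h1]
    ring

-- ===== scaled membership characterization =====

lemma snoc_zero_fun (m : ℕ) : (Fin.snoc (0 : Fin m → ℝ) 0 : Fin (m+1) → ℝ) = 0 := by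
  funext a
  rcases Fin.eq_castSucc_or_eq_last a with ⟨i, hi⟩ | hlast
  · rw [hi, Fin.snoc_castSucc]; rfl
  · rw [hlast, Fin.snoc_last]; rfl

lemma mem_S_iff (m : ℕ) (σ : Equiv.Perm (Fin (m+1))) (p : Fin m → ℝ) :
    p ∈ {p ∈ Pzono m | (Msigma m σ).mulVec p = p} ↔
      (∀ i j : Fin (m+1), (Fin.snoc p 0 : Fin (m+1) → ℝ) i - (Fin.snoc p 0 : Fin (m+1) → ℝ) j ≤ 1)
        ∧ ((Fin.snoc p 0 : Fin (m+1) → ℝ) ∘ σ = Fin.snoc p 0) := by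
  rw [Set.mem_sep_iff, pzono_char, fix_char]

lemma mem_scaled (m : ℕ) (σ : Equiv.Perm (Fin (m+1))) (t : ℕ) (p : Fin m → ℝ) :
    p ∈ (t:ℝ) • {p ∈ Pzono m | (Msigma m σ).mulVec p = p} ↔
      (∀ i j : Fin (m+1), (Fin.snoc p 0 : Fin (m+1) → ℝ) i - (Fin.snoc p 0 : Fin (m+1) → ℝ) j ≤ t)
        ∧ ((Fin.snoc p 0 : Fin (m+1) → ℝ) ∘ σ = Fin.snoc p 0) := by
  rcases Nat.eq_zero_or_pos t with rfl | ht
  · have hS0 : (0 : Fin m → ℝ) ∈ {p ∈ Pzono m | (Msigma m σ).mulVec p = p} := by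
      rw [mem_S_iff]
      constructor
      · intro i j; rw [snoc_zero_fun]; simp
      · rw [snoc_zero_fun]; funext a; rfl
    rw [Nat.cast_zero, Set.zero_smul_set ⟨0, hS0⟩, Set.mem_zero]
    constructor
    · rintro rfl
      constructor
      · intro i j; rw [snoc_zero_fun]; simp
      · rw [snoc_zero_fun]; funext a; rfl
    · rintro ⟨h1, h2⟩
      have hzero : ∀ a, (Fin.snoc p 0 : Fin (m+1) → ℝ) a = 0 := by
        intro a
        have ha := h1 a (Fin.last m)
        have hb := h1 (Fin.last m) a
        rw [Fin.snoc_last] at ha hb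
        simp at ha hb
        linarith
      have : p = 0 := by
        funext i
        have := hzero i.castSucc
        rwa [Fin.snoc_castSucc] at this
      simp [this]
  · have htR : (t:ℝ) ≠ 0 := by positivity
    rw [Set.mem_smul_set_iff_inv_smul_mem₀ htR, mem_S_iff]
    have hsnoc : (Fin.snoc ((t:ℝ)⁻¹ • p) 0 : Fin (m+1) → ℝ)
        = (t:ℝ)⁻¹ • (Fin.snoc p 0 : Fin (m+1) → ℝ) := by
      funext a
      rcases Fin.eq_castSucc_or_eq_last a with ⟨i, hi⟩ | hlast
      · subst hi; simp only [Fin.snoc_castSucc, Pi.smul_apply]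
      · subst hlast; simp only [Fin.snoc_last, Pi.smul_apply, smul_zero]
    rw [hsnoc]
    have htpos : (0:ℝ) < t := by positivity
    constructor
    · rintro ⟨h1, h2⟩
      constructor
      · intro i j
        have h := h1 i j
        simp only [Pi.smul_apply, smul_eq_mul] at h
        have h' := mul_le_mul_of_nonneg_left h (le_of_lt htpos)
        rw [mul_sub, ← mul_assoc, ← mul_assoc, mul_inv_cancel₀ htR, one_mul, one_mul,
          mul_one] at h'
        linarith
      · funext a
        have := congrFun h2 a
        simp only [Function.comp_apply, Pi.smul_apply, smul_eq_mul] at this ⊢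
        exact mul_left_cancel₀ (inv_ne_zero htR) this
    · rintro ⟨h1, h2⟩
      constructor
      · intro i j
        have h := h1 i j
        simp only [Pi.smul_apply, smul_eq_mul]
        have h' := mul_le_mul_of_nonneg_left h (le_of_lt (inv_pos.2 htpos))
        rw [inv_mul_cancel₀ htR, mul_sub] at h'
        linarith
      · funext a
        have := congrFun h2 a
        simp only [Function.comp_apply, Pi.smul_apply, smul_eq_mul] at this ⊢
        rw [this]

-- ===== integer version =====

lemma int_cond_iff (m : ℕ) (σ : Equiv.Perm (Fin (m+1))) (t : ℕ) (x : Fin m → ℤ) :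
    (fun i => (x i : ℝ)) ∈ (t:ℝ) • {p ∈ Pzono m | (Msigma m σ).mulVec p = p} ↔
      ((∀ i j : Fin (m+1), (Fin.snoc x 0 : Fin (m+1) → ℤ) i - (Fin.snoc x 0 : Fin (m+1) → ℤ) j ≤ (t:ℤ))
        ∧ ((Fin.snoc x 0 : Fin (m+1) → ℤ) ∘ σ = Fin.snoc x 0)) := by
  rw [mem_scaled]
  have hcast : (Fin.snoc (fun i => (x i : ℝ)) 0 : Fin (m+1) → ℝ)
      = fun a => ((Fin.snoc x 0 : Fin (m+1) → ℤ) a : ℝ) := by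
    funext a
    rcases Fin.eq_castSucc_or_eq_last a with ⟨i, hi⟩ | hlast
    · rw [hi, Fin.snoc_castSucc, Fin.snoc_castSucc]
    · rw [hlast, Fin.snoc_last, Fin.snoc_last]; simp
  rw [hcast]
  constructor
  · rintro ⟨h1, h2⟩
    constructor
    · intro i j
      have := h1 i j
      rw [← Int.cast_sub] at this
      exact_mod_cast this
    · funext a
      have := congrFun h2 a
      simp only [Function.comp_apply] at this ⊢
      exact_mod_cast this
  · rintro ⟨h1, h2⟩
    constructor
    · intro i j
      have := h1 i j
      rw [← Int.cast_sub]
      exact_mod_cast this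
    · funext a
      have := congrFun h2 a
      simp only [Function.comp_apply] at this ⊢
      rw [this]

open Finset in
lemma per_elem {Q : Type*} [Fintype Q] (t : ℕ) (g : Q → ℤ) (q0 : Q) (hq0 : g q0 = 0) :
    ((Finset.Icc (-(t:ℤ)) 0).filter (fun a => ∀ b, a ≤ g b ∧ g b ≤ a + t)).card
    = ((Finset.Icc (-(t:ℤ)) (-1)).filter (fun a => ∀ b, a + 1 ≤ g b ∧ g b ≤ a + t)).card
      + (if ∀ a b, g a - g b ≤ (t:ℤ) then 1 else 0) := by
  classical
  set F : Finset ℤ := Finset.univ.image g with hF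
  have hFne : F.Nonempty := ⟨g q0, mem_image.2 ⟨q0, mem_univ _, rfl⟩⟩
  set M := F.max' hFne with hM
  set mn := F.min' hFne with hmn
  have hmem : ∀ b, g b ∈ F := fun b => mem_image.2 ⟨b, mem_univ _, rfl⟩
  have hmn0 : mn ≤ 0 := hq0 ▸ Finset.min'_le _ _ (hmem q0)
  have hM0 : (0:ℤ) ≤ M := hq0 ▸ Finset.le_max' _ _ (hmem q0)
  have h1 : (Finset.Icc (-(t:ℤ)) 0).filter (fun a => ∀ b, a ≤ g b ∧ g b ≤ a + t)
      = Finset.Icc (M - t) mn := by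
    ext a
    simp only [mem_filter, Finset.mem_Icc]
    constructor
    · rintro ⟨⟨h1, h2⟩, h3⟩
      constructor
      · have := Finset.max'_le F hFne (a + t) (by
          intro y hy; obtain ⟨b, -, rfl⟩ := mem_image.1 hy; exact (h3 b).2)
        omega
      · exact Finset.le_min' _ _ _ (by
          intro y hy; obtain ⟨b, -, rfl⟩ := mem_image.1 hy; exact (h3 b).1)
    · rintro ⟨h1, h2⟩
      refine ⟨⟨by omega, by omega⟩, fun b => ⟨le_trans h2 (Finset.min'_le _ _ (hmem b)),
        by have := Finset.le_max' F _ (hmem b); omega⟩⟩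
  have h2 : (Finset.Icc (-(t:ℤ)) (-1)).filter (fun a => ∀ b, a + 1 ≤ g b ∧ g b ≤ a + t)
      = Finset.Icc (M - t) (mn - 1) := by
    ext a
    simp only [mem_filter, Finset.mem_Icc]
    constructor
    · rintro ⟨⟨h1, h2⟩, h3⟩
      constructor
      · have := Finset.max'_le F hFne (a + t) (by
          intro y hy; obtain ⟨b, -, rfl⟩ := mem_image.1 hy; exact (h3 b).2)
        omega
      · have := Finset.le_min' F hFne (a+1) (by
          intro y hy; obtain ⟨b, -, rfl⟩ := mem_image.1 hy; exact (h3 b).1)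
        omega
    · rintro ⟨h1, h2⟩
      refine ⟨⟨by omega, by omega⟩, fun b => ⟨by have := Finset.min'_le _ _ (hmem b); omega,
        by have := Finset.le_max' F _ (hmem b); omega⟩⟩
  have h3 : (∀ a b, g a - g b ≤ (t:ℤ)) ↔ M - mn ≤ t := by
    constructor
    · intro h
      obtain ⟨a, -, ha⟩ := mem_image.1 (F.max'_mem hFne)
      obtain ⟨b, -, hb⟩ := mem_image.1 (F.min'_mem hFne)
      rw [hM, hmn, ← ha, ← hb]; exact h a b
    · intro h a b
      have h1 := Finset.le_max' F _ (hmem a)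
      have h2 := Finset.min'_le F _ (hmem b)
      omega
  rw [h1, h2, Int.card_Icc, Int.card_Icc]
  by_cases h : ∀ a b, g a - g b ≤ (t:ℤ)
  · rw [if_pos h]
    have := h3.1 h
    omega
  · rw [if_neg h]
    have : ¬ (M - mn ≤ t) := fun hh => h (h3.2 hh)
    omega

open Finset in
lemma window_count (Q : Type*) [Fintype Q] [DecidableEq Q] (q0 : Q) (t : ℕ) (lo hi : ℤ)
    (h1 : -(t:ℤ) ≤ lo) (h2 : hi ≤ t) (h3 : lo ≤ 0) (h4 : 0 ≤ hi) :
    (((Fintype.piFinset fun _ : Q => Finset.Icc (-(t:ℤ)) t).filter (fun g => g q0 = 0)).filter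
        (fun g => ∀ b, lo ≤ g b ∧ g b ≤ hi)).card
      = (hi + 1 - lo).toNat ^ (Fintype.card Q - 1) := by
  have key : ((Fintype.piFinset fun _ : Q => Finset.Icc (-(t:ℤ)) t).filter
        (fun g => g q0 = 0)).filter (fun g => ∀ b, lo ≤ g b ∧ g b ≤ hi)
      = Fintype.piFinset (fun b : Q => if b = q0 then ({0} : Finset ℤ)
            else Finset.Icc lo hi) := by
    ext g
    simp only [Finset.mem_filter, Fintype.mem_piFinset, Finset.mem_Icc]
    constructor
    · rintro ⟨⟨-, h0⟩, h⟩
      intro b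
      by_cases hb : b = q0
      · simp [hb, h0]
      · simp [hb]; exact h b
    · intro h
      have h0 : g q0 = 0 := by have := h q0; simpa using this
      refine ⟨⟨fun b => ?_, h0⟩, fun b => ?_⟩
      · by_cases hb : b = q0
        · subst hb; rw [h0]; constructor <;> omega
        · have := h b; rw [if_neg hb, Finset.mem_Icc] at this; omega
      · by_cases hb : b = q0
        · subst hb; rw [h0]; exact ⟨h3, h4⟩
        · have := h b; rw [if_neg hb, Finset.mem_Icc] at this; omega
  rw [key, Fintype.card_piFinset]
  rw [← Finset.mul_prod_erase Finset.univ _ (Finset.mem_univ q0)]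
  rw [if_pos rfl, Finset.card_singleton, one_mul]
  rw [Finset.prod_congr rfl (fun b hb => by
    rw [if_neg (Finset.ne_of_mem_erase hb)])]
  rw [Finset.prod_const, Int.card_Icc]
  rw [Finset.card_erase_of_mem (Finset.mem_univ q0), Finset.card_univ]

open Finset in
lemma count_main (Q : Type*) [Fintype Q] [DecidableEq Q] (q0 : Q) (t : ℕ) :
    Nat.card {g : Q → ℤ // g q0 = 0 ∧ ∀ a b, g a - g b ≤ (t:ℤ)}
      = (t + 1) ^ (Fintype.card Q) - t ^ (Fintype.card Q) := by
  set k := Fintype.card Q with hk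
  have hkpos : 0 < k := Fintype.card_pos_iff.2 ⟨q0⟩
  have e1 : ((0 + 1 - -(t:ℤ)).toNat) = t + 1 := by omega
  have e2 : ((-1 + 1 - -(t:ℤ)).toNat) = t := by omega
  set T0 : Finset (Q → ℤ) :=
    (Fintype.piFinset fun _ : Q => Finset.Icc (-(t:ℤ)) t).filter (fun g => g q0 = 0) with hT0
  set P : (Q → ℤ) → Prop := fun g => g q0 = 0 ∧ ∀ a b, g a - g b ≤ (t:ℤ) with hP
  set S : Finset (Q → ℤ) := T0.filter (fun g => ∀ a b, g a - g b ≤ (t:ℤ)) with hS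
  have hiff : ∀ g : Q → ℤ, P g ↔ g ∈ S := by
    intro g
    rw [hS, Finset.mem_filter, hT0, Finset.mem_filter, Fintype.mem_piFinset]
    simp only [Finset.mem_Icc, hP]
    constructor
    · rintro ⟨h0, h⟩
      refine ⟨⟨fun b => ?_, h0⟩, h⟩
      have h1 := h b q0
      have h2 := h q0 b
      rw [h0] at h1 h2; omega
    · rintro ⟨⟨-, h0⟩, h⟩; exact ⟨h0, h⟩
  have hcard : Nat.card {g : Q → ℤ // P g} = S.card := by
    rw [Nat.card_congr (Equiv.subtypeEquivRight hiff), Nat.card_eq_finsetCard]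
  rw [hcard]
  -- first sum
  have step1 : ∀ a ∈ Finset.Icc (-(t:ℤ)) 0,
      (T0.filter (fun g => ∀ b, a ≤ g b ∧ g b ≤ a + t)).card = (t+1) ^ (k - 1) := by
    intro a ha
    rw [Finset.mem_Icc] at ha
    rw [hT0, window_count Q q0 t a (a + t) (by omega) (by omega) (by omega) (by omega)]
    rw [show (a + (t:ℤ) + 1 - a).toNat = t + 1 by omega]
  have step2 : ∀ a ∈ Finset.Icc (-(t:ℤ)) (-1),
      (T0.filter (fun g => ∀ b, a + 1 ≤ g b ∧ g b ≤ a + t)).card = t ^ (k - 1) := by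
    intro a ha
    rw [Finset.mem_Icc] at ha
    rw [hT0, window_count Q q0 t (a+1) (a + t) (by omega) (by omega) (by omega) (by omega)]
    rw [show (a + (t:ℤ) + 1 - (a+1)).toNat = t by omega]
  have A1 : ∑ g ∈ T0, ((Finset.Icc (-(t:ℤ)) 0).filter
        (fun a => ∀ b, a ≤ g b ∧ g b ≤ a + t)).card = (t+1) ^ k := by
    have swap : ∑ g ∈ T0, ((Finset.Icc (-(t:ℤ)) 0).filter
          (fun a => ∀ b, a ≤ g b ∧ g b ≤ a + t)).card
        = ∑ a ∈ Finset.Icc (-(t:ℤ)) 0,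
            (T0.filter (fun g => ∀ b, a ≤ g b ∧ g b ≤ a + t)).card := by
      simp_rw [Finset.card_filter]
      rw [Finset.sum_comm]
    rw [swap, Finset.sum_congr rfl step1, Finset.sum_const, Int.card_Icc, e1, smul_eq_mul,
      ← pow_succ']
    congr 1
    exact Nat.succ_pred_eq_of_pos hkpos
  have A2 : ∑ g ∈ T0, ((Finset.Icc (-(t:ℤ)) (-1)).filter
        (fun a => ∀ b, a + 1 ≤ g b ∧ g b ≤ a + t)).card = t ^ k := by
    have swap : ∑ g ∈ T0, ((Finset.Icc (-(t:ℤ)) (-1)).filter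
          (fun a => ∀ b, a + 1 ≤ g b ∧ g b ≤ a + t)).card
        = ∑ a ∈ Finset.Icc (-(t:ℤ)) (-1),
            (T0.filter (fun g => ∀ b, a + 1 ≤ g b ∧ g b ≤ a + t)).card := by
      simp_rw [Finset.card_filter]
      rw [Finset.sum_comm]
    rw [swap, Finset.sum_congr rfl step2, Finset.sum_const, Int.card_Icc, e2, smul_eq_mul,
      ← pow_succ']
    congr 1
    exact Nat.succ_pred_eq_of_pos hkpos
  have key : (t+1) ^ k = t ^ k + S.card := by
    rw [← A1, ← A2, hS, Finset.card_filter, ← Finset.sum_add_distrib]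
    refine Finset.sum_congr rfl fun g hg => ?_
    have hq0 : g q0 = 0 := (Finset.mem_filter.1 hg).2
    exact per_elem t g q0 hq0
  rw [key, Nat.add_sub_cancel_left]

-- ===== quotient by cycles =====

noncomputable def cycSetoid (m : ℕ) (σ : Equiv.Perm (Fin (m + 1))) : Setoid (Fin (m + 1)) :=
  ⟨σ.SameCycle, Equiv.Perm.SameCycle.equivalence σ⟩

lemma card_cycleSupports (m : ℕ) (σ : Equiv.Perm (Fin (m + 1))) :
    (cycleSupports m σ).card = Nat.card (Quotient (cycSetoid m σ)) := by
  classical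
  letI : DecidableEq (Quotient (cycSetoid m σ)) := Classical.decEq _
  letI : Fintype (Quotient (cycSetoid m σ)) := Fintype.ofFinite _
  set f : Quotient (cycSetoid m σ) → Finset (Fin (m + 1)) :=
    Quotient.lift (fun x => Finset.univ.filter fun y => σ.SameCycle x y)
      (by
        intro a b hab
        ext z
        simp only [Finset.mem_filter, Finset.mem_univ, true_and]
        exact ⟨fun h => (Equiv.Perm.SameCycle.symm hab).trans h, fun h => hab.trans h⟩) with hf
  have hinj : Function.Injective f := by
    intro a b
    induction a using Quotient.ind
    induction b using Quotient.ind
    rename_i x y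
    intro h
    simp only [hf, Quotient.lift_mk] at h
    have hx : x ∈ Finset.univ.filter fun z => σ.SameCycle x z := by
      simp [Equiv.Perm.SameCycle.refl]
    rw [h] at hx
    simp only [Finset.mem_filter, Finset.mem_univ, true_and] at hx
    exact Quotient.sound (hx.symm)
  have himg : cycleSupports m σ = Finset.univ.image f := by
    rw [cycleSupports]
    ext s
    simp only [Finset.mem_image, Finset.mem_univ, true_and]
    constructor
    · rintro ⟨x, rfl⟩
      exact ⟨Quotient.mk _ x, rfl⟩
    · rintro ⟨a, rfl⟩
      induction a using Quotient.ind
      rename_i x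
      exact ⟨x, rfl⟩
  rw [himg, Finset.card_image_of_injective _ hinj, Finset.card_univ, Nat.card_eq_fintype_card]

lemma invariant_of_comp (m : ℕ) (σ : Equiv.Perm (Fin (m + 1))) (y : Fin (m + 1) → ℤ)
    (hy : y ∘ σ = y) : ∀ a b, σ.SameCycle a b → y a = y b := by
  have hpow : ∀ (n : ℕ) (a : Fin (m + 1)), y ((σ ^ n) a) = y a := by
    intro n
    induction n with
    | zero => intro a; simp
    | succ n ih =>
      intro a
      rw [pow_succ, Equiv.Perm.mul_apply, ih (σ a)]
      exact congrFun hy a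
  intro a b hab
  obtain ⟨n, -, hn⟩ := hab.exists_pow_eq'
  rw [← hn, hpow]

/-- for `σ ∈ S_n` with `k` cycles (counting fixed points), the lattice point
enumerator of the fixed polytope `P_{n-1}^σ` is `L(t) = (t+1)^k - t^k` (with `n = m+1`). -/
theorem lattice_points_of_fixed_polytope (m : ℕ) (σ : Equiv.Perm (Fin (m + 1))) (t : ℕ) :
    Nat.card {x : Fin m → ℤ //
        (fun i => (x i : ℝ)) ∈ (t : ℝ) • {p ∈ Pzono m | (Msigma m σ).mulVec p = p}}
      = (t + 1) ^ (cycleSupports m σ).card - t ^ (cycleSupports m σ).card := by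
  classical
  letI : DecidableEq (Quotient (cycSetoid m σ)) := Classical.decEq _
  letI : Fintype (Quotient (cycSetoid m σ)) := Fintype.ofFinite _
  have hylem : ∀ (g : Quotient (cycSetoid m σ) → ℤ),
      g (Quotient.mk (cycSetoid m σ) (Fin.last m)) = 0 →
      ∀ a : Fin (m+1),
        (Fin.snoc (fun i : Fin m => g (Quotient.mk (cycSetoid m σ) i.castSucc)) 0
          : Fin (m+1) → ℤ) a = g (Quotient.mk (cycSetoid m σ) a) := by
    intro g hg a
    rcases Fin.eq_castSucc_or_eq_last a with ⟨i, hi⟩ | hlast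
    · rw [hi, Fin.snoc_castSucc]
    · rw [hlast, Fin.snoc_last, hg]
  have E : {x : Fin m → ℤ //
        (fun i => (x i : ℝ)) ∈ (t : ℝ) • {p ∈ Pzono m | (Msigma m σ).mulVec p = p}}
      ≃ {g : Quotient (cycSetoid m σ) → ℤ //
          g (Quotient.mk (cycSetoid m σ) (Fin.last m)) = 0 ∧ ∀ a b, g a - g b ≤ (t:ℤ)} := by
    refine Equiv.trans (Equiv.subtypeEquivRight (fun x => int_cond_iff m σ t x)) ?_
    refine ⟨fun x => ⟨Quotient.lift (Fin.snoc x.1 0 : Fin (m+1) → ℤ)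
        (invariant_of_comp m σ _ x.2.2), ?_, ?_⟩,
      fun g => ⟨fun i => g.1 (Quotient.mk (cycSetoid m σ) i.castSucc), ?_, ?_⟩, ?_, ?_⟩
    · exact Fin.snoc_last _ _
    · intro a b
      induction a using Quotient.ind
      induction b using Quotient.ind
      exact x.2.1 _ _
    · intro i j
      rw [hylem g.1 g.2.1 i, hylem g.1 g.2.1 j]
      exact g.2.2 _ _
    · funext a
      rw [Function.comp_apply, hylem g.1 g.2.1 (σ a), hylem g.1 g.2.1 a]
      have hq : Quotient.mk (cycSetoid m σ) (σ a) = Quotient.mk (cycSetoid m σ) a :=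
        Quot.sound (Equiv.Perm.SameCycle.symm (⟨1, by simp⟩ : σ.SameCycle a (σ a)))
      rw [hq]
    · intro x
      apply Subtype.ext
      funext i
      show (Fin.snoc (x.1 : Fin m → ℤ) 0 : Fin (m+1) → ℤ) i.castSucc = x.1 i
      exact Fin.snoc_castSucc _ _ _
    · intro g
      apply Subtype.ext
      funext a
      induction a using Quotient.ind
      rename_i a
      exact hylem g.1 g.2.1 a
  rw [Nat.card_congr E, count_main _ (Quotient.mk (cycSetoid m σ) (Fin.last m)) t,
    card_cycleSupports, Nat.card_eq_fintype_card]
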